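/- Let c₃, C₃ > 0 and suppose g : [κ₀, K] → ℝ satisfies g''(κ) ≥ c₃ − C₃⟨z(κ)⟩^{-1-ε} where g = |z|², ε > 0, and suppose |z(κ₀)|^{1+ε} ≥ 2C₃/c₃ and g'(κ₀) > 0. Then |z(κ)|^{1+ε} ≥ 2C₃/c₃ for all κ ∈ [κ₀, K], and consequently g''(κ) ≥ c₃/2 on [κ₀, K]. -/

import Mathlib

open Set Filter Topology

/-
Once `‖z‖^{1+ε} ≥ 2C₃/c₃`, the differential inequality gives `g'' ≥ c₃/2 > 0`. So as long as
`g = ‖z‖²` has not dropped below `g κ₀`, both `g` and `g'` keep increasing; a continuous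
induction on `[κ₀, K]` shows that `g` never drops below `g κ₀`, hence `‖z‖` never drops below
`‖z κ₀‖` and the bound persists.
-/

theorem HasDerivAt.eventually_nhdsGT_lt {f : ℝ → ℝ} {f' x : ℝ} (hf : HasDerivAt f f' x)
    (hpos : 0 < f') : ∀ᶠ y in 𝓝[>] x, f x < f y := by
  have hslope : ∀ᶠ y in 𝓝[>] x, 0 < slope f x y :=
    (hasDerivAt_iff_tendsto_slope.mp hf).mono_left (nhdsGT_le_nhdsNE x)
      |>.eventually (eventually_gt_nhds hpos)
  filter_upwards [hslope, self_mem_nhdsWithin] with y hy hxy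
  exact (slope_pos_iff_of_le (le_of_lt hxy)).mp hy

theorem left_le_of_deriv_pos_of_deriv2_pos_on_superlevel {f f' f'' : ℝ → ℝ} {a b : ℝ}
    (hf : ∀ x ∈ Icc a b, HasDerivAt f (f' x) x)
    (hf' : ∀ x ∈ Icc a b, HasDerivAt f' (f'' x) x)
    (ha : 0 < f' a) (hf'' : ∀ x ∈ Icc a b, f a ≤ f x → 0 < f'' x) :
    ∀ x ∈ Icc a b, f a ≤ f x := by
  set s := {x | f a ≤ f x ∧ f' a ≤ f' x}
  have hclosed : IsClosed (s ∩ Icc a b) := by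
    have h₁ := ContinuousOn.preimage_isClosed_of_isClosed
      (fun x hx ↦ (hf x hx).continuousAt.continuousWithinAt) isClosed_Icc (isClosed_Ici (a := f a))
    have h₂ := ContinuousOn.preimage_isClosed_of_isClosed
      (fun x hx ↦ (hf' x hx).continuousAt.continuousWithinAt) isClosed_Icc
      (isClosed_Ici (a := f' a))
    convert h₁.inter h₂ using 1
    ext x
    simp only [s, mem_inter_iff, mem_ofPred_eq, mem_preimage, mem_Ici]
    tauto
  have hstep : ∀ x ∈ s ∩ Ico a b, s ∈ 𝓝[>] x := by
    rintro x ⟨⟨hfx, hf'x⟩, hx⟩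
    have hxab : x ∈ Icc a b := Ico_subset_Icc_self hx
    filter_upwards [(hf x hxab).eventually_nhdsGT_lt (ha.trans_le hf'x),
      (hf' x hxab).eventually_nhdsGT_lt (hf'' x hxab hfx)] with y hy hy'
    exact ⟨hfx.trans hy.le, hf'x.trans hy'.le⟩
  exact fun x hx ↦ (hclosed.Icc_subset_of_forall_mem_nhdsWithin ⟨le_rfl, le_rfl⟩ hstep hx).1

theorem mul_sqrt_one_add_sq_rpow_neg_le {c C p r : ℝ} (hc : 0 < c) (hp : 0 ≤ p) (hr : 0 ≤ r)
    (h : 2 * C / c ≤ r ^ p) : C * √(1 + r ^ 2) ^ (-p) ≤ c / 2 := by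
  have hr_le : r ≤ √(1 + r ^ 2) := Real.le_sqrt_of_sq_le (by linarith)
  have hpos : 0 < √(1 + r ^ 2) ^ p := Real.rpow_pos_of_pos (by positivity) p
  have hC : 2 * C ≤ c * √(1 + r ^ 2) ^ p :=
    (div_le_iff₀' hc).mp (h.trans (Real.rpow_le_rpow hr hr_le hp))
  rw [Real.rpow_neg (by positivity), ← div_eq_mul_inv, div_le_iff₀ hpos]
  linarith

theorem stmt_5_general (d : ℕ) (κ₀ K c₃ C₃ ε : ℝ)
    (hc : 0 < c₃) (hε : 0 < ε)
    (z : ℝ → EuclideanSpace ℝ (Fin d)) (g g' g'' : ℝ → ℝ)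
    (hg : ∀ κ ∈ Icc κ₀ K, g κ = ‖z κ‖^2)
    (hderiv1 : ∀ κ ∈ Icc κ₀ K, HasDerivAt g (g' κ) κ)
    (hderiv2 : ∀ κ ∈ Icc κ₀ K, HasDerivAt g' (g'' κ) κ)
    (hlow : ∀ κ ∈ Icc κ₀ K,
      c₃ - C₃ * (Real.sqrt (1 + ‖z κ‖^2)) ^ (-(1 + ε)) ≤ g'' κ)
    (hbig : 2 * C₃ / c₃ ≤ ‖z κ₀‖ ^ (1 + ε))
    (hinit : 0 < g' κ₀) :
    ∀ κ ∈ Icc κ₀ K,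
      2 * C₃ / c₃ ≤ ‖z κ‖ ^ (1 + ε) ∧ c₃ / 2 ≤ g'' κ := by
  have hbound : ∀ κ ∈ Icc κ₀ K, ‖z κ₀‖ ≤ ‖z κ‖ →
      2 * C₃ / c₃ ≤ ‖z κ‖ ^ (1 + ε) ∧ c₃ / 2 ≤ g'' κ := by
    intro κ hκ hle
    have hbig' := hbig.trans (Real.rpow_le_rpow (norm_nonneg _) hle (by linarith))
    exact ⟨hbig', by
      linarith [hlow κ hκ, mul_sqrt_one_add_sq_rpow_neg_le hc (by linarith) (norm_nonneg _) hbig']⟩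
  have hnorm_le : ∀ κ ∈ Icc κ₀ K, g κ₀ ≤ g κ → ‖z κ₀‖ ≤ ‖z κ‖ := by
    intro κ hκ h
    rw [hg κ₀ ⟨le_rfl, hκ.1.trans hκ.2⟩, hg κ hκ] at h
    exact (pow_le_pow_iff_left₀ (norm_nonneg _) (norm_nonneg _) two_ne_zero).mp h
  have hg_le : ∀ κ ∈ Icc κ₀ K, g κ₀ ≤ g κ :=
    left_le_of_deriv_pos_of_deriv2_pos_on_superlevel hderiv1 hderiv2 hinit fun κ hκ h ↦ by
      linarith [(hbound κ hκ (hnorm_le κ hκ h)).2]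
  exact fun κ hκ ↦ hbound κ hκ (hnorm_le κ hκ (hg_le κ hκ))

/-- Bootstrap step: if `g = ‖z‖²` satisfies `g'' ≥ c₃ − C₃⟨z⟩^{-1-ε}`,
`‖z κ₀‖^{1+ε} ≥ 2C₃/c₃` and `g'(κ₀) > 0`, then `‖z κ‖^{1+ε} ≥ 2C₃/c₃` on `[κ₀,K]`,
and consequently `g'' ≥ c₃/2` there. -/
theorem stmt_5 (d : ℕ) (κ₀ K c₃ C₃ ε : ℝ) (hκ : κ₀ ≤ K)
    (hc : 0 < c₃) (hC : 0 < C₃) (hε : 0 < ε)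
    (z : ℝ → EuclideanSpace ℝ (Fin d)) (g g' g'' : ℝ → ℝ)
    (hz : ContDiff ℝ 2 z)
    (hg : ∀ κ ∈ Icc κ₀ K, g κ = ‖z κ‖^2)
    (hderiv1 : ∀ κ ∈ Icc κ₀ K, HasDerivAt g (g' κ) κ)
    (hderiv2 : ∀ κ ∈ Icc κ₀ K, HasDerivAt g' (g'' κ) κ)
    (hlow : ∀ κ ∈ Icc κ₀ K,
      c₃ - C₃ * (Real.sqrt (1 + ‖z κ‖^2)) ^ (-(1 + ε)) ≤ g'' κ)
    (hbig : 2 * C₃ / c₃ ≤ ‖z κ₀‖ ^ (1 + ε))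
    (hinit : 0 < g' κ₀) :
    ∀ κ ∈ Icc κ₀ K,
      2 * C₃ / c₃ ≤ ‖z κ‖ ^ (1 + ε) ∧ c₃ / 2 ≤ g'' κ :=
  stmt_5_general d κ₀ K c₃ C₃ ε hc hε z g g' g'' hg hderiv1 hderiv2 hlow hbig hinit
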